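/- For M = 2, the function Φ_2(x,t,p) defined as (1/√(πt)) ∫_p^∞ exp(−(x−y)²/t) · π^{−1/2}(3/2 − y²) e^{−y²} dy equals (e^{−x²/(1+t)}/(2√π)) · [erfc(F(t,x,p)) · P_2(t,x) − (e^{−F(t,x,p)²}/√π) · Q_2(t,x,p)], where P_2(t,x) = (1+t)^{−1/2} + (1/2)(1+t)^{−3/2} − x²(1+t)^{−5/2}, Q_2(t,x,p) = (√t/(1+t))·(x/(1+t) + p), and F(t,x,p) = √((1+t)/t)·(p − x/(1+t)). -/

import Mathlib

open MeasureTheory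

noncomputable def erfc (z : ℝ) : ℝ :=
  (2 / Real.sqrt Real.pi) * ∫ s in Set.Ioi z, Real.exp (-s ^ 2)

noncomputable def Ffun (t x y : ℝ) : ℝ :=
  Real.sqrt ((1 + t) / t) * (y - x / (1 + t))

noncomputable def P2 (t x : ℝ) : ℝ :=
  (Real.sqrt (1 + t))⁻¹ + (1 / 2) * ((Real.sqrt (1 + t)) ^ 3)⁻¹ -
    x ^ 2 * ((Real.sqrt (1 + t)) ^ 5)⁻¹

noncomputable def Q2 (t x p : ℝ) : ℝ :=
  (Real.sqrt t / (1 + t)) * (x / (1 + t) + p)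

/-!
Completing the square, `(x - y)² / t + y² = x² / (1 + t) + (Ffun t x y)²`, turns the integrand
into `e^{-x²/(1+t)}` times a quadratic polynomial in `s = Ffun t x y` times `e^{-s²}`. After the
affine substitution `y ↦ s` only the Gaussian tail moments over `(F, ∞)` remain:
`∫ e^{-s²} = (√π / 2) erfc F`, `∫ s e^{-s²} = e^{-F²} / 2` and, by parts,
`∫ s² e^{-s²} = (√π / 4) erfc F + F e^{-F²} / 2`.
-/

open Set Filter Real Topology

section GaussianTail

variable (z : ℝ)

lemma integrableOn_Ioi_exp_neg_sq : IntegrableOn (fun s : ℝ => exp (-s ^ 2)) (Ioi z) := by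
  simpa using (integrable_exp_neg_mul_sq one_pos).integrableOn

lemma integrableOn_Ioi_mul_exp_neg_sq : IntegrableOn (fun s : ℝ => s * exp (-s ^ 2)) (Ioi z) := by
  simpa using (integrable_mul_exp_neg_mul_sq one_pos).integrableOn

lemma integrableOn_Ioi_sq_mul_exp_neg_sq :
    IntegrableOn (fun s : ℝ => s ^ 2 * exp (-s ^ 2)) (Ioi z) := by
  have h := (integrable_rpow_mul_exp_neg_mul_sq one_pos (s := 2) (by norm_num)).integrableOn
    (s := Ioi z)
  simpa only [rpow_two, neg_one_mul] using h

lemma tendsto_mul_exp_neg_sq_atTop : Tendsto (fun s : ℝ => s * exp (-s ^ 2)) atTop (𝓝 0) := by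
  refine squeeze_zero' ?_ ?_ (by simpa using tendsto_pow_mul_exp_neg_atTop_nhds_zero 1)
  · filter_upwards [eventually_ge_atTop 0] with s hs
    positivity
  · filter_upwards [eventually_ge_atTop 1] with s hs
    gcongr
    nlinarith

lemma integral_Ioi_mul_exp_neg_sq : ∫ s in Ioi z, s * exp (-s ^ 2) = exp (-z ^ 2) / 2 := by
  have hderiv (s : ℝ) : HasDerivAt (fun s => -exp (-s ^ 2) / 2) (s * exp (-s ^ 2)) s := by
    have := (((hasDerivAt_pow 2 s).fun_neg).exp.fun_neg).div_const 2
    exact this.congr_deriv (by ring)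
  have hlim : Tendsto (fun s : ℝ => -exp (-s ^ 2) / 2) atTop (𝓝 0) := by
    have : Tendsto (fun s : ℝ => -s ^ 2) atTop atBot :=
      tendsto_neg_atBot_iff.mpr (tendsto_pow_atTop two_ne_zero)
    simpa using ((tendsto_exp_atBot.comp this).neg.div_const 2)
  rw [integral_Ioi_of_hasDerivAt_of_tendsto' (fun s _ => hderiv s)
    (integrableOn_Ioi_mul_exp_neg_sq z) hlim]
  ring

lemma integral_Ioi_sq_mul_exp_neg_sq :
    ∫ s in Ioi z, s ^ 2 * exp (-s ^ 2) =
      (∫ s in Ioi z, exp (-s ^ 2)) / 2 + z * exp (-z ^ 2) / 2 := by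
  have hderiv (s : ℝ) : HasDerivAt (fun s => -(s * exp (-s ^ 2)) / 2)
      (s ^ 2 * exp (-s ^ 2) - exp (-s ^ 2) / 2) s := by
    have := (((hasDerivAt_id s).mul ((hasDerivAt_pow 2 s).fun_neg).exp).fun_neg).div_const 2
    exact this.congr_deriv (by simp; ring)
  have hint := (integrableOn_Ioi_sq_mul_exp_neg_sq z).sub
    ((integrableOn_Ioi_exp_neg_sq z).div_const 2)
  have h := integral_Ioi_of_hasDerivAt_of_tendsto' (fun s _ => hderiv s) hint
    (by simpa using (tendsto_mul_exp_neg_sq_atTop.neg.div_const 2 :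
      Tendsto (fun s : ℝ => -(s * exp (-s ^ 2)) / 2) atTop (𝓝 (-0 / 2))))
  rw [integral_sub (integrableOn_Ioi_sq_mul_exp_neg_sq z)
    ((integrableOn_Ioi_exp_neg_sq z).div_const 2), integral_div] at h
  linarith

lemma integral_Ioi_quadratic_mul_exp_neg_sq (c₀ c₁ c₂ : ℝ) :
    ∫ s in Ioi z, (c₀ + c₁ * s + c₂ * s ^ 2) * exp (-s ^ 2) =
      (c₀ + c₂ / 2) * (∫ s in Ioi z, exp (-s ^ 2)) + (c₁ + c₂ * z) * exp (-z ^ 2) / 2 := by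
  have h₀ := (integrableOn_Ioi_exp_neg_sq z).const_mul c₀
  have h₁ := (integrableOn_Ioi_mul_exp_neg_sq z).const_mul c₁
  have h₂ := (integrableOn_Ioi_sq_mul_exp_neg_sq z).const_mul c₂
  have h₀₁ : IntegrableOn (fun s => c₀ * exp (-s ^ 2) + c₁ * (s * exp (-s ^ 2))) (Ioi z) :=
    h₀.add h₁
  have hsplit (s : ℝ) : (c₀ + c₁ * s + c₂ * s ^ 2) * exp (-s ^ 2) =
      c₀ * exp (-s ^ 2) + c₁ * (s * exp (-s ^ 2)) + c₂ * (s ^ 2 * exp (-s ^ 2)) := by ring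
  simp_rw [hsplit]
  rw [integral_add h₀₁ h₂, integral_add h₀ h₁, integral_const_mul, integral_const_mul,
    integral_const_mul, integral_Ioi_mul_exp_neg_sq, integral_Ioi_sq_mul_exp_neg_sq]
  ring

end GaussianTail

lemma integral_Ioi_comp_sub_right (g : ℝ → ℝ) (a c : ℝ) :
    ∫ y in Ioi a, g (y - c) = ∫ s in Ioi (a - c), g s := by
  rw [← (measurePreserving_sub_right volume c).setIntegral_preimage_emb
    (MeasurableEquiv.subRight c).measurableEmbedding g (Ioi (a - c))]
  congr 1
  ext y
  simp

lemma integral_Ioi_comp_mul_sub (g : ℝ → ℝ) (a m : ℝ) {b : ℝ} (hb : 0 < b) :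
    ∫ y in Ioi a, g (b * (y - m)) = b⁻¹ * ∫ s in Ioi (b * (a - m)), g s := by
  rw [integral_Ioi_comp_sub_right (fun u => g (b * u)), integral_comp_mul_left_Ioi g _ hb,
    smul_eq_mul]

lemma exp_neg_sq_div_mul_exp_neg_sq {t : ℝ} (ht : 0 < t) (x y : ℝ) :
    exp (-(x - y) ^ 2 / t) * exp (-y ^ 2) = exp (-x ^ 2 / (1 + t)) * exp (-Ffun t x y ^ 2) := by
  rw [← exp_add, ← exp_add, Ffun, mul_pow, sq_sqrt (by positivity)]
  congr 1
  field_simp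
  ring

lemma exp_neg_sq_div_mul_three_halves_sub_sq {t : ℝ} (ht : 0 < t) (x y : ℝ) :
    exp (-(x - y) ^ 2 / t) * ((3 / 2 - y ^ 2) * exp (-y ^ 2)) =
      exp (-x ^ 2 / (1 + t)) * ((3 / 2 - (x / (1 + t)) ^ 2 +
        -(2 * (x / (1 + t)) / √((1 + t) / t)) * Ffun t x y + -(t / (1 + t)) * Ffun t x y ^ 2) *
          exp (-Ffun t x y ^ 2)) := by
  -- `y = x / (1 + t) + Ffun t x y / √((1 + t) / t)`
  have hpoly : 3 / 2 - y ^ 2 = 3 / 2 - (x / (1 + t)) ^ 2 +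
      -(2 * (x / (1 + t)) / √((1 + t) / t)) * Ffun t x y + -(t / (1 + t)) * Ffun t x y ^ 2 := by
    have : 0 < 1 + t := by linarith
    rw [Ffun, mul_pow, sq_sqrt (by positivity)]
    field_simp
    ring
  rw [hpoly, mul_left_comm, exp_neg_sq_div_mul_exp_neg_sq ht]
  ring

lemma P2_eq {t : ℝ} (ht : 0 < 1 + t) (x : ℝ) :
    P2 t x = (3 / 2 - (x / (1 + t)) ^ 2 - t / (1 + t) / 2) / √(1 + t) := by
  have hsq := sq_sqrt ht.le
  have hpos := sqrt_pos.mpr ht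
  rw [P2]
  field_simp
  rw [show √(1 + t) ^ 4 = (√(1 + t) ^ 2) ^ 2 by ring, hsq]
  ring

lemma Q2_eq {t : ℝ} (ht : 0 < t) (x p : ℝ) :
    Q2 t x p = (x / (1 + t) + p) * (t / (1 + t)) / √t := by
  have hsq := sq_sqrt ht.le
  have hpos := sqrt_pos.mpr ht
  rw [Q2]
  field_simp
  rw [hsq]

theorem stmt19 (t x p : ℝ) (ht : 0 < t) :
    (1 / Real.sqrt (Real.pi * t)) *
        (∫ y in Set.Ioi p, Real.exp (-(x - y) ^ 2 / t) *
          ((Real.sqrt Real.pi)⁻¹ * (3 / 2 - y ^ 2) * Real.exp (-y ^ 2))) =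
      (Real.exp (-x ^ 2 / (1 + t)) / (2 * Real.sqrt Real.pi)) *
        (erfc (Ffun t x p) * P2 t x -
          (Real.exp (-(Ffun t x p) ^ 2) / Real.sqrt Real.pi) * Q2 t x p) := by
  have ht₁ : 0 < 1 + t := by linarith
  set b := √((1 + t) / t) with hb_def
  set m := x / (1 + t)
  have hb : 0 < b := sqrt_pos.mpr (by positivity)
  have hb₂ : b ^ 2 = (1 + t) / t := sq_sqrt (by positivity)
  set c₀ := 3 / 2 - m ^ 2
  set c₁ := -(2 * m / b)
  set c₂ := -(t / (1 + t))
  have hintegrand (y : ℝ) : exp (-(x - y) ^ 2 / t) * ((√π)⁻¹ * (3 / 2 - y ^ 2) * exp (-y ^ 2)) =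
      exp (-x ^ 2 / (1 + t)) * (√π)⁻¹ *
        ((c₀ + c₁ * (b * (y - m)) + c₂ * (b * (y - m)) ^ 2) * exp (-(b * (y - m)) ^ 2)) := by
    have h := exp_neg_sq_div_mul_three_halves_sub_sq ht x y
    rw [show Ffun t x y = b * (y - m) from rfl] at h
    linear_combination (√π)⁻¹ * h
  have hsb : √t * b = √(1 + t) := by
    rw [hb_def, sqrt_div ht₁.le, mul_div_cancel₀ _ (sqrt_pos.mpr ht).ne']
  rw [setIntegral_congr_fun measurableSet_Ioi (fun y _ => hintegrand y), integral_const_mul,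
    integral_Ioi_comp_mul_sub (fun s => (c₀ + c₁ * s + c₂ * s ^ 2) * exp (-s ^ 2)) p m hb,
    integral_Ioi_quadratic_mul_exp_neg_sq, erfc, P2_eq ht₁, Q2_eq ht, sqrt_mul pi_pos.le,
    show Ffun t x p = b * (p - m) from rfl, ← hsb]
  set J := ∫ s in Ioi (b * (p - m)), exp (-s ^ 2)
  set e := exp (-(b * (p - m)) ^ 2)
  have hm : m * (1 + t) = x := div_mul_cancel₀ x ht₁.ne'
  have htb : t * b ^ 2 = 1 + t := by rw [hb₂]; field_simp
  simp only [c₀, c₁, c₂]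
  field_simp
  linear_combination (-2 * b * J * (x + m * (1 + t)) - (1 + t) * e) * hm + ((1 + t) * m + x) * e * htb
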